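/- Let ε : E → 𝒯^× be a cartesian multitensor morphism where 𝒯 is the identity monad on Set (so 𝒯^×ₙ(X₁,...,Xₙ) = ∏ᵢXᵢ). Then E is determined by the sets Ēₙ := Eₙ(1,...,1) via Eₙ(X₁,...,Xₙ) ≅ Ēₙ × ∏ᵢXᵢ, and the multitensor structure (unit and substitution) of E corresponds exactly to a non-symmetric operad structure (Ē, ū, σ̄) in Set: an element ū ∈ Ē₁ and functions σ̄ : Ē_k × Ē_{n₁} × ... × Ē_{n_k} → Ē_{n₁+...+n_k} satisfying the non-symmetric operad axioms. -/

import Mathlib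

/-!
Since `ε` is cartesian, the naturality square of `εₙ` at the unique map `X ⟶ 1` to the terminal
family is a pullback, so `Eₙ(X) ≅ Eₙ(1) ×_{Pₙ(1)} Pₙ(X) = Ēₙ × ∏ᵢ Xᵢ`, as `Pₙ(1)` is a point.
Under these bijections the unit and substitution of `E` split into an `Ē`-component, which
defines `ū` and `σ̄`, and a product component, which is that of `P`. The operad axioms for
`(Ē, ū, σ̄)` are the unit and associativity laws of `E` at constant families of `1`.
-/

set_option linter.unusedSectionVars false

open CategoryTheory CategoryTheory.Limits

universe w v u

namespace Paper

/-- Splitting a sigma type over `Fin (k+1)` as first block plus the rest. -/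
def sigmaSucc {k : ℕ} (F : Fin (k + 1) → Type*) :
    (Σ i, F i) ≃ F 0 ⊕ (Σ i : Fin k, F i.succ) where
  toFun x := Fin.cases (motive := fun i => F i → F 0 ⊕ (Σ i : Fin k, F i.succ))
    (fun j => Sum.inl j) (fun i j => Sum.inr ⟨i, j⟩) x.1 x.2
  invFun y := y.elim (fun j => ⟨0, j⟩) (fun x => ⟨x.1.succ, x.2⟩)
  left_inv := by rintro ⟨i, j⟩; induction i using Fin.cases <;> rfl
  right_inv := by rintro (j | ⟨i, j⟩) <;> rfl

/-- The canonical order preserving identification of a sum of finite ordinals,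
    listing the blocks in order. -/
def finSigma : ∀ {k : ℕ} (n : Fin k → ℕ), (Σ i, Fin (n i)) ≃ Fin (∑ i, n i)
  | 0, n =>
      (Equiv.equivOfIsEmpty _ (Fin 0)).trans (finCongr (by simp))
  | (k+1), n =>
      (sigmaSucc _).trans <|
        ((Equiv.refl (Fin (n 0))).sumCongr (finSigma (fun i => n i.succ))).trans <|
          finSumFinEquiv.trans (finCongr (Fin.sum_univ_succ n).symm)

/-- Concatenation of a family of families along `finSigma`. -/
def concat {k : ℕ} (n : Fin k → ℕ) {α : Sort*} (X : ∀ i, Fin (n i) → α) :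
    Fin (∑ i, n i) → α :=
  fun p => X ((finSigma n).symm p).1 ((finSigma n).symm p).2

/-- A multitensor (lax monoidal structure) on `V` : a family of functors
`Eₙ : Vⁿ ⥤ V`, a unit `u : X ⟶ E₁X` and substitution maps
`σ : E_k(E_{n₁}(X₁₁,…),…) ⟶ E_{n₁+⋯+n_k}(X₁₁,…,X_{k n_k})` which are natural
and satisfy unit and associativity laws. -/
structure Multitensor (V : Type u) [Category.{v} V] where
  E : ∀ n : ℕ, (∀ _ : Fin n, V) ⥤ V
  unit : ∀ X : V, X ⟶ (E 1).obj (fun _ => X)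
  unit_natural : ∀ {X Y : V} (f : X ⟶ Y),
    f ≫ unit Y = unit X ≫ (E 1).map (fun _ => f)
  subst : ∀ {k : ℕ} (n : Fin k → ℕ) (X : ∀ i : Fin k, Fin (n i) → V),
    (E k).obj (fun i => (E (n i)).obj (X i)) ⟶ (E (∑ i, n i)).obj (concat n X)
  subst_natural : ∀ {k : ℕ} (n : Fin k → ℕ) {X Y : ∀ i : Fin k, Fin (n i) → V}
    (f : ∀ i j, X i j ⟶ Y i j),
    (E k).map (fun i => (E (n i)).map (f i)) ≫ subst n Y =
      subst n X ≫ (E (∑ i, n i)).map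
        (fun p => f ((finSigma n).symm p).1 ((finSigma n).symm p).2)
  subst_unit_left : ∀ {n : ℕ} (X : Fin n → V),
    HEq (unit ((E n).obj X) ≫ subst (fun _ : Fin 1 => n) (fun _ => X))
      (𝟙 ((E n).obj X))
  subst_unit_right : ∀ {n : ℕ} (X : Fin n → V),
    HEq ((E n).map (fun i => unit (X i)) ≫ subst (fun _ : Fin n => 1) (fun i _ => X i))
      (𝟙 ((E n).obj X))
  subst_assoc : ∀ {k : ℕ} (n : Fin k → ℕ) (m : ∀ i : Fin k, Fin (n i) → ℕ)
    (X : ∀ (i : Fin k) (j : Fin (n i)), Fin (m i j) → V),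
    HEq ((E k).map (fun i => subst (m i) (X i)) ≫
          subst (fun i => ∑ j, m i j) (fun i => concat (m i) (X i)))
        (subst n (fun i j => (E (m i j)).obj (X i j)) ≫
          subst (fun p => m ((finSigma n).symm p).1 ((finSigma n).symm p).2)
                (fun p => X ((finSigma n).symm p).1 ((finSigma n).symm p).2))


section
variable {V : Type u} [Category.{v} V] [HasFiniteLimits V]

/-- The property that a multitensor `E` is the multitensor `T^×` of a monad `T`:
`T^×ₙ(X₁,…,Xₙ) = ∏ᵢ T Xᵢ`, the unit is the monad unit `η`, and the substitution is the
composite `∏ᵢT∏ⱼTX_{ij} ⟶ ∏ᵢ∏ⱼT²X_{ij} ⟶ ∏_{ij}TX_{ij}` built from the canonical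
product comparison maps and the monad multiplication `μ` (expressed here via the product
projections). -/
structure IsTcross (T : CategoryTheory.Monad V) (E : Multitensor V) : Prop where
  obj_eq : ∀ (n : ℕ) (X : Fin n → V), (E.E n).obj X = ∏ᶜ (fun i => T.obj (X i))
  map_eq : ∀ (n : ℕ) (X Y : Fin n → V) (f : ∀ i, X i ⟶ Y i) (i : Fin n),
    (E.E n).map f ≫ eqToHom (obj_eq n Y) ≫ Pi.π _ i
      = eqToHom (obj_eq n X) ≫ Pi.π _ i ≫ T.map (f i)
  unit_eq : ∀ (X : V) (i : Fin 1),
    E.unit X ≫ eqToHom (obj_eq 1 (fun _ => X)) ≫ Pi.π _ i = T.η.app X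
  subst_eq : ∀ {k : ℕ} (n : Fin k → ℕ) (X : ∀ i, Fin (n i) → V) (p : Fin (∑ i, n i)),
    E.subst n X ≫ eqToHom (obj_eq _ (concat n X)) ≫ Pi.π _ p
      = eqToHom (obj_eq k (fun i => (E.E (n i)).obj (X i)))
          ≫ Pi.π _ ((finSigma n).symm p).1
          ≫ T.map (eqToHom (obj_eq _ (X ((finSigma n).symm p).1))
              ≫ Pi.π _ ((finSigma n).symm p).2)
          ≫ T.μ.app (X ((finSigma n).symm p).1 ((finSigma n).symm p).2)

end

section
variable {V : Type u} [Category.{v} V]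

/-- A natural transformation is cartesian when all naturality squares are pullbacks. -/
def IsCartesianNT {C : Type w} [Category.{v'} C] {F G : C ⥤ V} (α : F ⟶ G) : Prop :=
  ∀ {X Y : C} (f : X ⟶ Y), IsPullback (α.app X) (F.map f) (G.map f) (α.app Y)

/-- A morphism of multitensors: natural transformations commuting with units and
substitutions. -/
structure MultHom (E F : Multitensor V) where
  app : ∀ n : ℕ, E.E n ⟶ F.E n
  unit_comm : ∀ X : V, E.unit X ≫ (app 1).app (fun _ => X) = F.unit X
  subst_comm : ∀ {k : ℕ} (n : Fin k → ℕ) (X : ∀ i, Fin (n i) → V),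
    E.subst n X ≫ (app (∑ i, n i)).app (concat n X)
      = (app k).app (fun i => (E.E (n i)).obj (X i))
        ≫ (F.E k).map (fun i => (app (n i)).app (X i)) ≫ F.subst n X

end

end Paper

namespace CategoryTheory

theorem NatTrans.eq_id_of_types (α : 𝟭 (Type u) ⟶ 𝟭 (Type u)) : α = 𝟙 _ := by
  ext X x
  exact types_congr_hom (α.naturality (↾fun _ : PUnit.{u+1} => x)) PUnit.unit

theorem Monad.eq_id_of_toFunctor_eq_id {T : Monad (Type u)} (hT : T.toFunctor = 𝟭 _) :
    T = Monad.id _ := by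
  cases T with | mk T η μ
  subst hT
  obtain rfl := NatTrans.eq_id_of_types η
  obtain rfl := NatTrans.eq_id_of_types μ
  rfl

theorem types_heq_apply {A B C : Type u} (hBC : B = C) {f : A ⟶ B} {g : A ⟶ C}
    (hfg : HEq f g) (a : A) : HEq (f a) (g a) := by
  subst hBC
  rw [eq_of_heq hfg]

end CategoryTheory

namespace CategoryTheory.Limits.Types

noncomputable def equivProdOfIsPullback {X₁ X₂ X₃ X₄ : Type u} {t : X₁ ⟶ X₂} {r : X₂ ⟶ X₄}
    {l : X₁ ⟶ X₃} {b : X₃ ⟶ X₄} (h : IsPullback t l r b) [Subsingleton X₄] :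
    X₁ ≃ X₂ × X₃ :=
  Equiv.ofBijective (fun x => (t x, l x))
    ⟨fun _ _ hxy => ext_of_isPullback h (Prod.ext_iff.1 hxy).1 (Prod.ext_iff.1 hxy).2,
     fun ⟨x₂, x₃⟩ => (exists_of_isPullback h x₂ x₃ (Subsingleton.elim _ _)).imp
       fun _ ⟨h₂, h₃⟩ => Prod.ext h₂ h₃⟩

end CategoryTheory.Limits.Types

namespace Paper

/-- An identification of `P` with the cartesian product multitensor `X ↦ ∏ᵢ Xᵢ`. -/
structure ProductCoordinates (P : Multitensor (Type u)) where
  equiv : ∀ (n : ℕ) (X : Fin n → Type u), (P.E n).obj X ≃ ∀ i, X i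
  equiv_map : ∀ (n : ℕ) (X Y : Fin n → Type u) (f : X ⟶ Y) (g : (P.E n).obj X) (i : Fin n),
    equiv n Y ((P.E n).map f g) i = f i (equiv n X g i)
  equiv_unit : ∀ (X : Type u) (x : X) (i : Fin 1), equiv 1 (fun _ => X) (P.unit X x) i = x
  equiv_subst : ∀ {k : ℕ} (n : Fin k → ℕ) (X : ∀ i, Fin (n i) → Type u)
    (g : (P.E k).obj (fun i => (P.E (n i)).obj (X i))) (p : Fin (∑ i, n i)),
    equiv _ (concat n X) (P.subst n X g) p
      = equiv _ (X ((finSigma n).symm p).1)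
          (equiv k _ g ((finSigma n).symm p).1) ((finSigma n).symm p).2

theorem ProductCoordinates.subsingleton_obj_punit {P : Multitensor (Type u)}
    (C : ProductCoordinates P) (n : ℕ) : Subsingleton ((P.E n).obj (fun _ => PUnit.{u+1})) :=
  (C.equiv n _).subsingleton

noncomputable def IsTcross.productCoordinates {P : Multitensor (Type u)}
    (hP : IsTcross (Monad.id (Type u)) P) : ProductCoordinates P where
  equiv n X := (eqToIso (hP.obj_eq n X)).toEquiv.trans (Types.productIso.{0, u} X).toEquiv
  equiv_map n X Y f g i := types_congr_hom (hP.map_eq n X Y f i) g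
  equiv_unit X x i := types_congr_hom (hP.unit_eq X i) x
  equiv_subst n X g p := types_congr_hom (hP.subst_eq n X p) g

theorem sum_concat {k : ℕ} (n : Fin k → ℕ) (m : ∀ i, Fin (n i) → ℕ) :
    ∑ p, concat n m p = ∑ i, ∑ j, m i j :=
  (Fintype.sum_equiv (finSigma n).symm _ (fun x => m x.1 x.2) fun _ => rfl).trans
    (Fintype.sum_sigma _)

def toPUnit {n : ℕ} (X : Fin n → Type u) : X ⟶ (fun _ : Fin n => PUnit.{u+1}) :=
  fun _ => ↾fun _ => PUnit.unit

namespace Multitensor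

variable (E : Multitensor (Type u))

/-- `Ēₙ = Eₙ(1,…,1)`. -/
abbrev Ops (n : ℕ) : Type u := (E.E n).obj (fun _ => PUnit.{u+1})

abbrev unitOp : E.Ops 1 := E.unit PUnit PUnit.unit

variable {E}

def shape {n : ℕ} {X : Fin n → Type u} (g : (E.E n).obj X) : E.Ops n :=
  (E.E n).map (toPUnit X) g

theorem shape_map {n : ℕ} {X Y : Fin n → Type u} (f : X ⟶ Y) (g : (E.E n).obj X) :
    shape ((E.E n).map f g) = shape g := by
  rw [shape, ← Functor.map_comp_apply]
  rfl

theorem shape_of_ops {n : ℕ} (a : E.Ops n) : shape a = a :=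
  (E.E n).map_id_apply _ a

theorem shape_unit (X : Type u) (x : X) : shape (E.unit X x) = E.unitOp :=
  (types_congr_hom (E.unit_natural (↾fun _ : X => PUnit.unit.{u+1})) x).symm

theorem shape_subst {k : ℕ} (n : Fin k → ℕ) (X : ∀ i, Fin (n i) → Type u)
    (g : (E.E k).obj (fun i => (E.E (n i)).obj (X i))) :
    shape (E.subst n X g)
      = E.subst n (fun _ _ => PUnit) ((E.E k).map (fun i => (E.E (n i)).map (toPUnit (X i))) g) :=
  (types_congr_hom (E.subst_natural n (fun i => toPUnit (X i))) g).symm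

variable {P : Multitensor (Type u)} (C : ProductCoordinates P) (ε : MultHom E P)
  (hcart : ∀ n : ℕ, IsCartesianNT (ε.app n))

noncomputable def decompose (n : ℕ) (X : Fin n → Type u) : (E.E n).obj X ≃ E.Ops n × ∀ i, X i :=
  haveI := C.subsingleton_obj_punit n
  ((Types.equivProdOfIsPullback (hcart n (toPUnit X))).trans (Equiv.prodComm _ _)).trans
    ((Equiv.refl _).prodCongr (C.equiv n X))

theorem decompose_fst {n : ℕ} {X : Fin n → Type u} (g : (E.E n).obj X) :
    (decompose C ε hcart n X g).1 = shape g := rfl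

theorem decompose_snd {n : ℕ} {X : Fin n → Type u} (g : (E.E n).obj X) :
    (decompose C ε hcart n X g).2 = C.equiv n X ((ε.app n).app X g) := rfl

theorem decompose_map {n : ℕ} (X Y : Fin n → Type u) (f : X ⟶ Y) (g : (E.E n).obj X) :
    decompose C ε hcart n Y ((E.E n).map f g)
      = ((decompose C ε hcart n X g).1, fun i => f i ((decompose C ε hcart n X g).2 i)) := by
  refine Prod.ext (shape_map f g) (funext fun i => ?_)
  rw [decompose_snd, NatTrans.naturality_apply, C.equiv_map]
  rfl

theorem decompose_unit (X : Type u) (x : X) :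
    decompose C ε hcart 1 (fun _ => X) (E.unit X x) = (E.unitOp, fun _ => x) := by
  refine Prod.ext (shape_unit X x) (funext fun i => ?_)
  rw [decompose_snd, ← types_comp_apply, ε.unit_comm, C.equiv_unit]

noncomputable def substOps {k : ℕ} (n : Fin k → ℕ) (a : E.Ops k) (b : ∀ i, E.Ops (n i)) :
    E.Ops (∑ i, n i) :=
  E.subst n (fun _ _ => PUnit) ((decompose C ε hcart k (fun i => E.Ops (n i))).symm (a, b))

theorem substOps_eq_subst {k : ℕ} (n : Fin k → ℕ) {a : E.Ops k} {b : ∀ i, E.Ops (n i)}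
    {g : (E.E k).obj (fun i => E.Ops (n i))} (hg : decompose C ε hcart k _ g = (a, b)) :
    substOps C ε hcart n a b = E.subst n (fun _ _ => PUnit) g := by
  rw [substOps, ← hg, Equiv.symm_apply_apply]

theorem decompose_subst {k : ℕ} (n : Fin k → ℕ) (X : ∀ i, Fin (n i) → Type u)
    (g : (E.E k).obj (fun i => (E.E (n i)).obj (X i))) :
    decompose C ε hcart (∑ i, n i) (concat n X) (E.subst n X g)
      = (substOps C ε hcart n (decompose C ε hcart k _ g).1
          (fun i => (decompose C ε hcart (n i) (X i) ((decompose C ε hcart k _ g).2 i)).1),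
         fun p => (decompose C ε hcart _ (X ((finSigma n).symm p).1)
            ((decompose C ε hcart k _ g).2 ((finSigma n).symm p).1)).2
            ((finSigma n).symm p).2) := by
  refine Prod.ext ?_ (funext fun p => ?_)
  · rw [decompose_fst, shape_subst]
    exact (substOps_eq_subst C ε hcart n
      (decompose_map C ε hcart _ _ (fun i => (E.E (n i)).map (toPUnit (X i))) g)).symm
  · change C.equiv _ _ ((ε.app _).app _ (E.subst n X g)) p = _
    rw [← types_comp_apply (E.subst n X), ε.subst_comm, types_comp_apply, types_comp_apply,
      C.equiv_subst, C.equiv_map]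
    rfl

theorem substOps_unitOp_left (n : ℕ) (a : E.Ops n) :
    HEq (substOps C ε hcart (fun _ : Fin 1 => n) E.unitOp (fun _ => a)) a := by
  rw [substOps_eq_subst C ε hcart _ (decompose_unit C ε hcart (E.Ops n) a)]
  exact types_heq_apply (congrArg E.Ops (Fin.sum_univ_one _)) (E.subst_unit_left _) a

theorem substOps_unitOp_right (k : ℕ) (a : E.Ops k) :
    HEq (substOps C ε hcart (fun _ : Fin k => 1) a (fun _ => E.unitOp)) a := by
  have hg : decompose C ε hcart k _ ((E.E k).map (fun _ => E.unit PUnit) a)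
      = (a, fun _ => E.unitOp) := by
    rw [decompose_map, decompose_fst, shape_of_ops]
  rw [substOps_eq_subst C ε hcart _ hg]
  exact types_heq_apply (congrArg E.Ops (by simp)) (E.subst_unit_right _) a

theorem substOps_assoc (k : ℕ) (n : Fin k → ℕ) (m : ∀ i, Fin (n i) → ℕ)
    (a : E.Ops k) (b : ∀ i, E.Ops (n i)) (c : ∀ i j, E.Ops (m i j)) :
    HEq (substOps C ε hcart (concat n m) (substOps C ε hcart n a b)
          (fun p => c ((finSigma n).symm p).1 ((finSigma n).symm p).2))
        (substOps C ε hcart (fun i => ∑ j, m i j) a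
          (fun i => substOps C ε hcart (m i) (b i) (c i))) := by
  set inner := fun i => (decompose C ε hcart (n i) (fun j => E.Ops (m i j))).symm (b i, c i)
  set g := (decompose C ε hcart k (fun i => (E.E (n i)).obj (fun j => E.Ops (m i j)))).symm
    (a, inner)
  have hg : decompose C ε hcart k _ g = (a, inner) := Equiv.apply_symm_apply _ _
  have hinner : ∀ i, decompose C ε hcart (n i) _ (inner i) = (b i, c i) :=
    fun i => Equiv.apply_symm_apply _ _
  have hsubst : decompose C ε hcart _ _ (E.subst n _ g)
      = (substOps C ε hcart n a b, fun p => c ((finSigma n).symm p).1 ((finSigma n).symm p).2) := by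
    rw [decompose_subst, hg]
    simp only [hinner]
    rfl
  have hmap : decompose C ε hcart k _ ((E.E k).map (fun i => E.subst (m i) _) g)
      = (a, fun i => substOps C ε hcart (m i) (b i) (c i)) := by
    rw [decompose_map, hg]
    exact Prod.ext rfl (funext fun i => (substOps_eq_subst C ε hcart _ (hinner i)).symm)
  rw [substOps_eq_subst C ε hcart (concat n m) hsubst,
    substOps_eq_subst C ε hcart (fun i => ∑ j, m i j) hmap]
  exact (types_heq_apply (congrArg E.Ops (sum_concat n m).symm)
    (E.subst_assoc n m (fun _ _ _ => PUnit)) g).symm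

end Multitensor

end Paper

open Paper CategoryTheory.Limits

/-- STATEMENT 17: Let `ε : E → 𝒯^×` be a cartesian multitensor morphism, where `𝒯` is the
identity monad on `Set` (so that `𝒯^×ₙ(X₁,…,Xₙ) = ∏ᵢXᵢ`).  Then `E` is determined by the
sets `Ēₙ := Eₙ(1,…,1)` via `Eₙ(X₁,…,Xₙ) ≅ Ēₙ × ∏ᵢXᵢ` (compatibly with the functorial
action), and the unit and substitution of `E` correspond under these isomorphisms exactly
to a non-symmetric operad structure `(Ē, ū, σ̄)` in `Set`, satisfying the non-symmetric
operad axioms. -/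
theorem cartesian_multitensor_over_identity_is_set_operad
    (T : CategoryTheory.Monad (Type u)) (hT : T.toFunctor = 𝟭 (Type u))
    (P : Paper.Multitensor (Type u)) (hP : Paper.IsTcross T P)
    (E : Paper.Multitensor (Type u)) (ε : Paper.MultHom E P)
    (hcart : ∀ n : ℕ, Paper.IsCartesianNT (ε.app n)) :
    ∃ (Ebar : ℕ → Type u) (ubar : Ebar 1)
      (sbar : ∀ {k : ℕ} (n : Fin k → ℕ), Ebar k → (∀ i, Ebar (n i)) → Ebar (∑ i, n i)),
      -- the non-symmetric operad axioms for (Ē, ū, σ̄):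
      (∀ (n : ℕ) (a : Ebar n), HEq (sbar (k := 1) (fun _ => n) ubar (fun _ => a)) a) ∧
      (∀ (k : ℕ) (a : Ebar k), HEq (sbar (fun _ : Fin k => 1) a (fun _ => ubar)) a) ∧
      (∀ (k : ℕ) (n : Fin k → ℕ) (m : ∀ i, Fin (n i) → ℕ)
         (a : Ebar k) (b : ∀ i, Ebar (n i)) (c : ∀ i j, Ebar (m i j)),
        HEq (sbar (Paper.concat n m) (sbar n a b)
              (fun p => c ((Paper.finSigma n).symm p).1 ((Paper.finSigma n).symm p).2))
          (sbar (fun i => ∑ j, m i j) a (fun i => sbar (m i) (b i) (c i)))) ∧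
      -- E is identified with Ēₙ × ∏ᵢ Xᵢ, compatibly with everything:
      ∃ eqv : ∀ (n : ℕ) (X : Fin n → Type u), (E.E n).obj X ≃ (Ebar n × ∀ i, X i),
        (∀ (n : ℕ) (X Y : Fin n → Type u) (f : ∀ i, X i ⟶ Y i) (g : (E.E n).obj X),
          eqv n Y ((E.E n).map f g)
            = ((eqv n X g).1, fun i => f i ((eqv n X g).2 i))) ∧
        (∀ (X : Type u) (x : X), eqv 1 (fun _ => X) (E.unit X x) = (ubar, fun _ => x)) ∧
        (∀ (k : ℕ) (n : Fin k → ℕ) (X : ∀ i, Fin (n i) → Type u)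
           (g : (E.E k).obj (fun i => (E.E (n i)).obj (X i))),
          eqv (∑ i, n i) (Paper.concat n X) (E.subst n X g)
            = (sbar n (eqv k _ g).1
                (fun i => (eqv (n i) (X i) ((eqv k _ g).2 i)).1),
               fun p => (eqv (n ((Paper.finSigma n).symm p).1) (X ((Paper.finSigma n).symm p).1)
                  ((eqv k _ g).2 ((Paper.finSigma n).symm p).1)).2
                  ((Paper.finSigma n).symm p).2)) := by
  obtain rfl := Monad.eq_id_of_toFunctor_eq_id hT
  let C := hP.productCoordinates
  exact ⟨E.Ops, E.unitOp, Multitensor.substOps C ε hcart,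
    Multitensor.substOps_unitOp_left C ε hcart, Multitensor.substOps_unitOp_right C ε hcart,
    Multitensor.substOps_assoc C ε hcart, Multitensor.decompose C ε hcart,
    fun _ => Multitensor.decompose_map C ε hcart, Multitensor.decompose_unit C ε hcart,
    fun _ => Multitensor.decompose_subst C ε hcart⟩
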